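/- For any N ≥ 0 and words w₁ ∈ 𝔥¹, w₂ a product of elements z_m = yx^{m-1}, w₃ ∈ 𝔥, one has yᴺ * (w₁w₂w₃) = Σ_{N₁+N₂=N}(yᴺ¹*w₁)w₂(yᴺ²*w₃) + Σ_{N₁+1+N₂=N}(yᴺ¹*w₁)w₂x(yᴺ²*w₃). -/

import Mathlib

open scoped BigOperators

abbrev Ltr := Fin 2

/-- `𝔥 = ℚ⟨x,y⟩`, realized as the monoid algebra of the free monoid on two letters. -/
abbrev H := MonoidAlgebra ℚ (FreeMonoid Ltr)

/-- The word `u₁⋯u_m` as an element of `𝔥`. -/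
noncomputable def wrd (l : List Ltr) : H := MonoidAlgebra.of ℚ (FreeMonoid Ltr) (FreeMonoid.ofList l)

/-- The generator `x`. -/
noncomputable def Xh : H := wrd [0]
/-- The generator `y`. -/
noncomputable def Yh : H := wrd [1]

/-- Letter produced when stuffling letters `u, v`: `y` iff both are `y`, else `x`. -/
noncomputable def ellt (a b : Ltr) : H := if a = 1 ∧ b = 1 then Yh else Xh
def cc1 (a b : Ltr) : ℚ := if a = 1 ∧ b = 0 then -1 else 1
def cc2 (a b : Ltr) : ℚ := if a = 0 ∧ b = 1 then -1 else 1
def cc3 (a b : Ltr) : ℚ := if a = 0 ∧ b = 0 then -1 else 1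

/-- The harmonic (stuffle) product on words of `𝔥`: on `𝔥¹` it is Hoffman's harmonic
product defined by `w*1 = 1*w = w` and
`z_k w₁ * z_l w₂ = z_k(w₁ * z_l w₂) + z_l(z_k w₁ * w₂) + z_{k+l}(w₁ * w₂)` with
`z_n = yx^{n-1}`, extended to all of `𝔥` (compatibly, via `w₁e₁ ⊛̃ w₂e₁ = (w₁*w₂)e₁`). -/
noncomputable def starW : List Ltr → List Ltr → H
  | [], v => wrd v
  | u, [] => wrd u
  | a :: u, b :: v =>
      cc1 a b • (ellt a b * starW u (b :: v)) + cc2 a b • (ellt a b * starW (a :: u) v)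
      + cc3 a b • (ellt a b * Xh * starW u v)
termination_by u v => u.length + v.length

/-- The harmonic product `*` on `𝔥`, extended bilinearly. -/
noncomputable def star (f g : H) : H :=
  f.coeff.sum fun u cu => g.coeff.sum fun v cv => (cu * cv) • starW u.toList v.toList

abbrev PS := PowerSeries H

/-- The harmonic product `*` extended coefficientwise to `𝔥[[T]]` (resp. `𝔥[[A]]`). -/
noncomputable def starPS (f g : PS) : PS :=
  PowerSeries.mk fun n =>
    ∑ p ∈ Finset.HasAntidiagonal.antidiagonal n,
      star (PowerSeries.coeff p.1 f) (PowerSeries.coeff p.2 g)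

/-- Membership in `𝔥¹ = ℚ ⊕ y𝔥`: every word of the support is empty or starts with `y`. -/
def inH1 (f : H) : Prop :=
  ∀ l ∈ f.coeff.support, FreeMonoid.toList l = [] ∨ (FreeMonoid.toList l).head? = some 1

/-!
For a word `w` write `φ_N(w) = yᴺ * w`. By the defining recursion of the harmonic product,
`φ_N(x w) = x φ_N(w)` and `φ_{N+1}(y w) = y φ_N(y w) + y φ_{N+1}(w) + yx φ_N(w)`. For words
`u, v`, the right-hand side of the identity, viewed as a function of the prefix `u`, satisfies
the same recursions, so induction on `u` and `N` proves the identity for words; both sides are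
additive in `w₁` and in `w₃`.
-/

open List Finset

lemma wrd_nil : wrd [] = 1 := rfl

lemma wrd_append (u v : List Ltr) : wrd (u ++ v) = wrd u * wrd v := by
  rw [wrd, wrd, wrd, FreeMonoid.ofList_append, map_mul]

lemma wrd_cons (a : Ltr) (u : List Ltr) : wrd (a :: u) = wrd [a] * wrd u :=
  wrd_append [a] u

lemma wrd_one_cons (u : List Ltr) : wrd (1 :: u) = Yh * wrd u :=
  wrd_cons 1 u

lemma wrd_replicate (a : Ltr) (n : ℕ) : wrd (replicate n a) = wrd [a] ^ n := by
  induction n with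
  | zero => rfl
  | succ n ih => rw [replicate_succ, wrd_cons, ih, pow_succ']

lemma Yh_pow (N : ℕ) : Yh ^ N = wrd (replicate N 1) :=
  (wrd_replicate 1 N).symm

lemma wrd_one_cons_replicate_zero (k : ℕ) : wrd (1 :: replicate k 0) = Yh * Xh ^ k := by
  rw [wrd_cons, wrd_replicate]; rfl

lemma starW_nil_left (v : List Ltr) : starW [] v = wrd v := by
  rw [starW]

lemma starW_nil_right (u : List Ltr) : starW u [] = wrd u := by
  cases u <;> simp [starW]

lemma starW_cons_cons (a b : Ltr) (u v : List Ltr) :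
    starW (a :: u) (b :: v) =
      cc1 a b • (ellt a b * starW u (b :: v)) + cc2 a b • (ellt a b * starW (a :: u) v)
        + cc3 a b • (ellt a b * Xh * starW u v) := by
  rw [starW]

lemma starW_replicate_one_cons_zero (N : ℕ) (v : List Ltr) :
    starW (replicate N 1) (0 :: v) = Xh * starW (replicate N 1) v := by
  induction N with
  | zero => rw [replicate_zero, starW_nil_left, starW_nil_left, wrd_cons]; rfl
  | succ N ih =>
    rw [replicate_succ, starW_cons_cons, ← replicate_succ, ih]
    simp only [cc1, cc2, cc3, ellt, Fin.isValue, and_self, and_true, and_false, zero_ne_one,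
      one_ne_zero, ↓reduceIte, neg_smul, one_smul]
    noncomm_ring

lemma starW_replicate_one_replicate_zero_append (N k : ℕ) (v : List Ltr) :
    starW (replicate N 1) (replicate k 0 ++ v) = Xh ^ k * starW (replicate N 1) v := by
  induction k with
  | zero => rw [replicate_zero, nil_append, pow_zero, one_mul]
  | succ k ih => rw [replicate_succ, cons_append, starW_replicate_one_cons_zero, ih, pow_succ',
      mul_assoc]

lemma starW_replicate_one_succ_cons_one (N : ℕ) (v : List Ltr) :
    starW (replicate (N + 1) 1) (1 :: v) =
      Yh * starW (replicate N 1) (1 :: v) + Yh * starW (replicate (N + 1) 1) v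
        + Yh * Xh * starW (replicate N 1) v := by
  rw [replicate_succ, starW_cons_cons]
  simp [cc1, cc2, cc3, ellt]

noncomputable def splitSum (z : H) (N : ℕ) (u v : List Ltr) : H :=
  ∑ p ∈ antidiagonal N, starW (replicate p.1 1) u * z * starW (replicate p.2 1) v

section splitSum

variable (z : H) (N : ℕ) (u v : List Ltr)

lemma splitSum_zero : splitSum z 0 u v = wrd u * z * wrd v := by
  simp [splitSum, starW_nil_left]

lemma splitSum_cons_zero : splitSum z N (0 :: u) v = Xh * splitSum z N u v := by
  simp only [splitSum, starW_replicate_one_cons_zero, mul_sum, mul_assoc]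

lemma splitSum_nil :
    splitSum z N [] v =
      z * starW (replicate N 1) v + Yh * (if N = 0 then 0 else splitSum z (N - 1) [] v) := by
  cases N with
  | zero => simp [splitSum_zero, starW_nil_left, wrd_nil]
  | succ N =>
    simp only [splitSum, Nat.sum_antidiagonal_succ, starW_nil_right, wrd_replicate, pow_zero,
      one_mul, if_neg N.succ_ne_zero, Nat.add_sub_cancel, mul_sum, pow_succ', mul_assoc]
    rfl

lemma splitSum_cons_one :
    splitSum z N (1 :: u) v =
      Yh * (if N = 0 then 0 else splitSum z (N - 1) (1 :: u) v) + Yh * splitSum z N u v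
        + Yh * Xh * (if N = 0 then 0 else splitSum z (N - 1) u v) := by
  cases N with
  | zero => simp [splitSum_zero, wrd_one_cons, mul_assoc]
  | succ N =>
    simp only [splitSum, Nat.sum_antidiagonal_succ, starW_replicate_one_succ_cons_one,
      if_neg N.succ_ne_zero, Nat.add_sub_cancel, replicate_zero, starW_nil_left, add_mul,
      sum_add_distrib, mul_sum, mul_add, mul_assoc, wrd_one_cons]
    abel

end splitSum

lemma starW_replicate_one_append_cons_append (k N : ℕ) (u v : List Ltr) :
    starW (replicate N 1) (u ++ 1 :: (replicate k 0 ++ v)) =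
      splitSum (Yh * Xh ^ k) N u v
        + if N = 0 then 0 else splitSum (Yh * Xh ^ k * Xh) (N - 1) u v := by
  have h_zero : ∀ u, starW [] (u ++ 1 :: (replicate k 0 ++ v)) =
      splitSum (Yh * Xh ^ k) 0 u v := by
    intro u
    rw [starW_nil_left, splitSum_zero, wrd_append, ← cons_append, wrd_append,
      wrd_one_cons_replicate_zero]
    simp only [mul_assoc]
  induction u generalizing N with
  | nil =>
    induction N with
    | zero => simpa using h_zero []
    | succ N ih =>
      have h_comm : ∀ w, Yh * Xh * (Xh ^ k * w) = Yh * Xh ^ k * Xh * w := fun w => by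
        rw [← mul_assoc, mul_assoc Yh, ← pow_succ', pow_succ, ← mul_assoc]
      rw [nil_append] at ih ⊢
      rw [starW_replicate_one_succ_cons_one, ih, starW_replicate_one_replicate_zero_append,
        starW_replicate_one_replicate_zero_append, splitSum_nil _ (N + 1)]
      simp only [if_neg N.succ_ne_zero, Nat.add_sub_cancel]
      rw [splitSum_nil (Yh * Xh ^ k * Xh) N, h_comm, ← mul_assoc Yh (Xh ^ k)]
      simp only [mul_add]
      abel
  | cons a u ih =>
    match a with
    | 0 =>
      rw [cons_append, starW_replicate_one_cons_zero, ih, splitSum_cons_zero, splitSum_cons_zero,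
        mul_add, mul_ite, mul_zero]
    | 1 =>
      induction N with
      | zero => simpa using h_zero (1 :: u)
      | succ N ihN =>
        rw [cons_append] at ihN ⊢
        rw [starW_replicate_one_succ_cons_one, ihN, ih, ih, splitSum_cons_one _ (N + 1)]
        simp only [if_neg N.succ_ne_zero, Nat.add_sub_cancel]
        rw [splitSum_cons_one (Yh * Xh ^ k * Xh) N]
        simp only [mul_add]
        abel

lemma star_single_single (a b : FreeMonoid Ltr) (c d : ℚ) :
    star (MonoidAlgebra.single a c) (MonoidAlgebra.single b d) =
      (c * d) • starW a.toList b.toList := by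
  rw [_root_.star, MonoidAlgebra.coeff_single, MonoidAlgebra.coeff_single,
    Finsupp.sum_single_index (by simp [Finsupp.sum]), Finsupp.sum_single_index (by simp)]

lemma star_zero_right (f : H) : star f 0 = 0 := by
  simp [_root_.star]

lemma star_add_right (f g g' : H) : star f (g + g') = star f g + star f g' := by
  unfold _root_.star
  rw [MonoidAlgebra.coeff_add, ← Finsupp.sum_add]
  congr 1
  funext u cu
  exact Finsupp.sum_add_index' (by simp) (by intro v b1 b2; simp [mul_add, add_smul])

lemma star_Yh_pow_single (N : ℕ) (w : FreeMonoid Ltr) (e : ℚ) :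
    star (Yh ^ N) (MonoidAlgebra.single w e) = e • starW (replicate N 1) w.toList := by
  rw [Yh_pow, wrd, MonoidAlgebra.of_apply, star_single_single,
    FreeMonoid.toList_ofList, one_mul]

lemma star_Yh_pow_single_mul_mul_single (N k : ℕ) (a b : FreeMonoid Ltr) (c d : ℚ) :
    star (Yh ^ N) (MonoidAlgebra.single a c * (Yh * Xh ^ k) * MonoidAlgebra.single b d)
      = (∑ p ∈ antidiagonal N, star (Yh ^ p.1) (MonoidAlgebra.single a c) * (Yh * Xh ^ k)
          * star (Yh ^ p.2) (MonoidAlgebra.single b d))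
        + if N = 0 then 0 else
            ∑ p ∈ antidiagonal (N - 1), star (Yh ^ p.1) (MonoidAlgebra.single a c)
              * (Yh * Xh ^ k) * Xh * star (Yh ^ p.2) (MonoidAlgebra.single b d) := by
  conv_lhs => rw [← wrd_one_cons_replicate_zero, wrd, MonoidAlgebra.of_apply,
    MonoidAlgebra.single_mul_single, MonoidAlgebra.single_mul_single, star_Yh_pow_single]
  simp only [FreeMonoid.toList_mul, FreeMonoid.toList_ofList, cons_append,
    starW_replicate_one_append_cons_append, splitSum, star_Yh_pow_single, smul_mul_assoc,
    mul_smul_comm, smul_smul, ← Finset.smul_sum, smul_add, smul_ite, smul_zero, mul_one,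
    mul_comm c d, mul_assoc]

theorem stmt15_general (N m : ℕ) (w₁ w₃ : H) :
    star (Yh ^ N) (w₁ * (Yh * Xh ^ (m - 1)) * w₃)
      = (∑ p ∈ Finset.HasAntidiagonal.antidiagonal N,
          star (Yh ^ p.1) w₁ * (Yh * Xh ^ (m - 1)) * star (Yh ^ p.2) w₃)
        + (if N = 0 then 0 else
            ∑ p ∈ Finset.HasAntidiagonal.antidiagonal (N - 1),
              star (Yh ^ p.1) w₁ * (Yh * Xh ^ (m - 1)) * Xh * star (Yh ^ p.2) w₃) := by
  induction w₁ using MonoidAlgebra.induction_linear with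
  | zero => simp only [zero_mul, star_zero_right, sum_const_zero, ite_self, add_zero]
  | add f g hf hg =>
    simp only [add_mul, star_add_right, hf, hg, sum_add_distrib]
    split_ifs <;> abel
  | single a c =>
    induction w₃ using MonoidAlgebra.induction_linear with
    | zero => simp only [mul_zero, star_zero_right, sum_const_zero, ite_self, add_zero]
    | add f g hf hg =>
      simp only [mul_add, star_add_right, hf, hg, sum_add_distrib]
      split_ifs <;> abel
    | single b d => exact star_Yh_pow_single_mul_mul_single N (m - 1) a b c d

/-- For `N ≥ 0`, `w₁ ∈ 𝔥¹`, `w₂ = z_m = yx^{m-1}` (`m ≥ 1`), `w₃ ∈ 𝔥`: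
`yᴺ * (w₁w₂w₃) = Σ_{N₁+N₂=N}(yᴺ¹*w₁)w₂(yᴺ²*w₃) + Σ_{N₁+1+N₂=N}(yᴺ¹*w₁)w₂x(yᴺ²*w₃)`. -/
theorem stmt15 (N m : ℕ) (hm : 1 ≤ m) (w₁ w₃ : H) (h₁ : inH1 w₁) :
    star (Yh ^ N) (w₁ * (Yh * Xh ^ (m - 1)) * w₃)
      = (∑ p ∈ Finset.HasAntidiagonal.antidiagonal N,
          star (Yh ^ p.1) w₁ * (Yh * Xh ^ (m - 1)) * star (Yh ^ p.2) w₃)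
        + (if N = 0 then 0 else
            ∑ p ∈ Finset.HasAntidiagonal.antidiagonal (N - 1),
              star (Yh ^ p.1) w₁ * (Yh * Xh ^ (m - 1)) * Xh * star (Yh ^ p.2) w₃) :=
  stmt15_general N m w₁ w₃
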